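/- There exists a two-agent, three-good instance that admits no complete allocation which is both EFM and non-wasteful. Concretely, for any 0 < ε < 1/2: good g_0 is indivisible for both agents with v_1(g_0) = v_2(g_0) = 1 − ε/2; good g_1 is divisible for agent 1 with v_1(g_1) = ε and indivisible for agent 2 with v_2(g_1) = 1 − ε; good g_2 is indivisible for agent 1 with v_1(g_2) = 1 − ε and divisible for agent 2 with v_2(g_2) = ε. -/

import Mathlib

open scoped BigOperators Classical

/-- An instance of fair division with subjective divisibility: `n` agents and `m` goods,
each good of total amount 1.  Each agent `i` assigns a nonnegative value `v i g` to each
good `g` and regards each good as either divisible or indivisible for her. -/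
structure FairDivision (n m : ℕ) where
  /-- agent `i`'s value for good `g` -/
  v : Fin n → Fin m → ℝ
  v_nonneg : ∀ i g, 0 ≤ v i g
  /-- `divisible i g` means agent `i` regards good `g` as divisible -/
  divisible : Fin n → Fin m → Prop

namespace FairDivision

variable {n m : ℕ}

/-- Agent `i`'s utility from receiving fraction `t ∈ [0,1]` of good `g`:
`t * v i g` if `g` is divisible for `i`; `v i g` if `g` is indivisible for `i` and `t = 1`;
and `0` if `g` is indivisible for `i` and `t < 1`. -/
noncomputable def frUtil (I : FairDivision n m) (i : Fin n) (g : Fin m) (t : ℝ) : ℝ :=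
  if I.divisible i g then t * I.v i g else if t = 1 then I.v i g else 0

/-- Agent `i`'s (additive) utility for a bundle `b`, given by the fraction `b g` of each good. -/
noncomputable def util (I : FairDivision n m) (i : Fin n) (b : Fin m → ℝ) : ℝ :=
  ∑ g, I.frUtil i g (b g)

/-- Agent `i`'s utility for the bundle `b` with good `g` omitted. -/
noncomputable def utilMinus (I : FairDivision n m) (i : Fin n) (b : Fin m → ℝ) (g : Fin m) : ℝ :=
  ∑ g' ∈ Finset.univ.erase g, I.frUtil i g' (b g')

/-- A complete allocation: fractions in `[0,1]` summing to `1` for every good. -/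
def IsAllocation (I : FairDivision n m) (x : Fin n → Fin m → ℝ) : Prop :=
  (∀ i g, 0 ≤ x i g ∧ x i g ≤ 1) ∧ ∀ g, ∑ i, x i g = 1

/-- A partial allocation: fractions in `[0,1]` summing to at most `1` for every good. -/
def IsPartialAllocation (I : FairDivision n m) (x : Fin n → Fin m → ℝ) : Prop :=
  (∀ i g, 0 ≤ x i g ∧ x i g ≤ 1) ∧ ∀ g, ∑ i, x i g ≤ 1

/-- The maximin share of agent `i`: the supremum, over all fractional `n`-partitions
`P` of the goods, of the minimum over the parts `P j` of agent `i`'s utility. -/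
noncomputable def MMS (I : FairDivision n m) (i : Fin n) : ℝ :=
  sSup { r : ℝ | ∃ P : Fin n → Fin m → ℝ, I.IsAllocation P ∧ r = ⨅ j, I.util i (P j) }

/-- Non-wastefulness: every positive fraction an agent receives yields her positive utility. -/
def NonWasteful (I : FairDivision n m) (x : Fin n → Fin m → ℝ) : Prop :=
  ∀ i g, 0 < x i g → 0 < I.frUtil i g (x i g)

/-- Envy-freeness. -/
def EF (I : FairDivision n m) (x : Fin n → Fin m → ℝ) : Prop :=
  ∀ i j, I.util i (x j) ≤ I.util i (x i)

/-- Envy-freeness for mixed goods: for all agents `i, j`, if every good `j` receives a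
positive fraction of is indivisible for `i`, then `i` does not envy `j` after removing some
such good from `j`'s bundle; otherwise `i` does not envy `j`. -/
def EFM (I : FairDivision n m) (x : Fin n → Fin m → ℝ) : Prop :=
  ∀ i j,
    ((∀ g, 0 < x j g → ¬ I.divisible i g) →
      ∃ g, 0 < x j g ∧ I.utilMinus i (x j) g ≤ I.util i (x i)) ∧
    ((¬ ∀ g, 0 < x j g → ¬ I.divisible i g) → I.util i (x j) ≤ I.util i (x i))

/-- EFXM: as EFM, but the envy must vanish after removing any positively valued such good. -/
def EFXM (I : FairDivision n m) (x : Fin n → Fin m → ℝ) : Prop :=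
  ∀ i j,
    ((∀ g, 0 < x j g → ¬ I.divisible i g) →
      ∀ g, 0 < x j g → 0 < I.v i g → I.utilMinus i (x j) g ≤ I.util i (x i)) ∧
    ((¬ ∀ g, 0 < x j g → ¬ I.divisible i g) → I.util i (x j) ≤ I.util i (x i))

/-- EF1M: if `j`'s bundle contains (a positive fraction of) some good that `i` regards as
indivisible and values positively, the envy of `i` must vanish after removing some such good;
otherwise `i` does not envy `j`. -/
def EF1M (I : FairDivision n m) (x : Fin n → Fin m → ℝ) : Prop :=
  ∀ i j,
    ((∃ g, 0 < x j g ∧ ¬ I.divisible i g ∧ 0 < I.v i g) →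
      ∃ g, 0 < x j g ∧ ¬ I.divisible i g ∧ 0 < I.v i g ∧
        I.utilMinus i (x j) g ≤ I.util i (x i)) ∧
    ((¬ ∃ g, 0 < x j g ∧ ¬ I.divisible i g ∧ 0 < I.v i g) → I.util i (x j) ≤ I.util i (x i))

/-- Pareto optimality (among complete allocations). -/
def ParetoOptimal (I : FairDivision n m) (x : Fin n → Fin m → ℝ) : Prop :=
  ¬ ∃ y, I.IsAllocation y ∧ (∀ i, I.util i (x i) ≤ I.util i (y i)) ∧
    ∃ i, I.util i (x i) < I.util i (y i)

/-- In a 3-agent instance, `B` (a set of whole goods) is a reducible bundle with respect to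
agent `i`: `u_i(B) ≥ (2/3)·MMS_i`, `u_j(M∖B) ≥ 2·MMS_j` for some agent `j ≠ i`, and
`u_k(M∖B) ≥ (4/3)·MMS_k` for the remaining agent `k`. -/
def IsReducible (I : FairDivision 3 m) (B : Finset (Fin m)) (i : Fin 3) : Prop :=
  2 / 3 * I.MMS i ≤ ∑ g ∈ B, I.v i g ∧
    ∃ j, j ≠ i ∧ 2 * I.MMS j ≤ ∑ g ∈ Bᶜ, I.v j g ∧
      ∀ k, k ≠ i → k ≠ j → 4 / 3 * I.MMS k ≤ ∑ g ∈ Bᶜ, I.v k g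

end FairDivision

/-!
Agents and goods are numbered from 0. Every good is indivisible for one of the two agents, so a
non-wasteful allocation hands out every good whole. If agent 1 got good 1, which agent 0 finds
divisible, agent 0 would have to be envy-free towards her; that forces agent 0 to hold goods 0
and 2, and then agent 1 envies agent 0, whose bundle contains good 2, divisible for agent 1.
Symmetrically agent 1 gets good 2. Whoever then gets good 0 holds two goods that are both
indivisible for the other agent, who values each of them, hence the bundle minus either one, at
least `1 - ε`, more than the `ε` she gets herself.
-/

namespace FairDivision

variable {n m : ℕ} (I : FairDivision n m)

@[simp]
lemma frUtil_zero (i : Fin n) (g : Fin m) : I.frUtil i g 0 = 0 := by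
  simp [frUtil]

@[simp]
lemma frUtil_one (i : Fin n) (g : Fin m) : I.frUtil i g 1 = I.v i g := by
  simp [frUtil]

lemma utilMinus_add_frUtil (i : Fin n) (b : Fin m → ℝ) (g : Fin m) :
    I.utilMinus i b g + I.frUtil i g (b g) = I.util i b :=
  Finset.sum_erase_add _ _ (Finset.mem_univ g)

variable {I}

lemma NonWasteful.eq_zero_or_eq_one {x : Fin n → Fin m → ℝ} (hnw : I.NonWasteful x)
    (hx : I.IsAllocation x) {i : Fin n} {g : Fin m} (hg : ¬ I.divisible i g) :
    x i g = 0 ∨ x i g = 1 := by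
  rcases (hx.1 i g).1.eq_or_lt with h | hpos
  · exact Or.inl h.symm
  · by_contra hne
    have := hnw i g hpos
    simp [frUtil, hg, (not_or.mp hne).2] at this

lemma EFM.util_le_of_divisible {x : Fin n → Fin m → ℝ} (hE : I.EFM x) {i j : Fin n} {g : Fin m}
    (hg : 0 < x j g) (hd : I.divisible i g) : I.util i (x j) ≤ I.util i (x i) :=
  (hE i j).2 fun h => h g hg hd

def wholeAlloc (σ : Fin m → Fin n) : Fin n → Fin m → ℝ :=
  fun i g => if σ g = i then 1 else 0

@[simp]
lemma wholeAlloc_pos_iff {σ : Fin m → Fin n} {i : Fin n} {g : Fin m} :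
    0 < wholeAlloc σ i g ↔ σ g = i := by
  unfold wholeAlloc; split_ifs <;> simp_all

lemma frUtil_wholeAlloc (σ : Fin m → Fin n) (i j : Fin n) (g : Fin m) :
    I.frUtil i g (wholeAlloc σ j g) = if σ g = j then I.v i g else 0 := by
  unfold wholeAlloc; split_ifs <;> simp

lemma util_wholeAlloc (σ : Fin m → Fin n) (i j : Fin n) :
    I.util i (wholeAlloc σ j) = ∑ g, if σ g = j then I.v i g else 0 :=
  Finset.sum_congr rfl fun g _ => frUtil_wholeAlloc σ i j g

lemma utilMinus_wholeAlloc (σ : Fin m → Fin n) (i j : Fin n) (g : Fin m) :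
    I.utilMinus i (wholeAlloc σ j) g =
      I.util i (wholeAlloc σ j) - if σ g = j then I.v i g else 0 := by
  rw [← utilMinus_add_frUtil I i _ g, frUtil_wholeAlloc, add_sub_cancel_right]

lemma NonWasteful.exists_eq_wholeAlloc {I : FairDivision 2 m} {x : Fin 2 → Fin m → ℝ}
    (hnw : I.NonWasteful x) (hx : I.IsAllocation x) (hind : ∀ g, ∃ i, ¬ I.divisible i g) :
    ∃ σ, x = wholeAlloc σ := by
  refine ⟨fun g => if x 0 g = 1 then 0 else 1, funext fun i => funext fun g => ?_⟩
  have hsum : x 0 g + x 1 g = 1 := by simpa [Fin.sum_univ_two] using hx.2 g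
  obtain ⟨k, hk⟩ := hind g
  have hwhole : x 0 g = 0 ∧ x 1 g = 1 ∨ x 0 g = 1 ∧ x 1 g = 0 := by
    have := hnw.eq_zero_or_eq_one hx hk
    obtain rfl | rfl : k = 0 ∨ k = 1 := by omega
    all_goals grind
  obtain rfl | rfl : i = 0 ∨ i = 1 := by omega
  all_goals rcases hwhole with ⟨h0, h1⟩ | ⟨h0, h1⟩ <;> simp [wholeAlloc, h0, h1]

lemma EFM.exists_util_sub_le_of_wholeAlloc {σ : Fin m → Fin n} (hE : I.EFM (wholeAlloc σ))
    {i j : Fin n} (hind : ∀ g, σ g = j → ¬ I.divisible i g) :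
    ∃ g, σ g = j ∧ I.util i (wholeAlloc σ j) - I.v i g ≤ I.util i (wholeAlloc σ i) := by
  obtain ⟨g, hg, hle⟩ := (hE i j).1 fun g hg => hind g (wholeAlloc_pos_iff.mp hg)
  rw [wholeAlloc_pos_iff] at hg
  rw [utilMinus_wholeAlloc, if_pos hg] at hle
  exact ⟨g, hg, hle⟩

end FairDivision

open FairDivision

noncomputable def efmCounterexample (ε : ℝ) (hε₀ : 0 ≤ ε) (hε₁ : ε ≤ 1) : FairDivision 2 3 where
  v := ![![1 - ε / 2, ε, 1 - ε], ![1 - ε / 2, 1 - ε, ε]]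
  v_nonneg i g := by fin_cases i <;> fin_cases g <;> simp <;> linarith
  divisible i g := (i = 0 ∧ g = 1) ∨ (i = 1 ∧ g = 2)

namespace efmCounterexample

variable {ε : ℝ} {hε₀ : 0 ≤ ε} {hε₁ : ε ≤ 1} {σ : Fin 3 → Fin 2}

lemma owner_one_eq_zero (hε : 0 < ε) (hE : (efmCounterexample ε hε₀ hε₁).EFM (wholeAlloc σ)) :
    σ 1 = 0 := by
  by_contra hσ1
  replace hσ1 : σ 1 = 1 := by omega
  have henvy₀ := hE.util_le_of_divisible (i := 0) (g := 1) (wholeAlloc_pos_iff.mpr hσ1)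
    (by simp [efmCounterexample])
  have hσ02 : σ 0 = 0 ∧ σ 2 = 0 := by
    obtain h0 | h0 : σ 0 = 0 ∨ σ 0 = 1 := by omega
    all_goals obtain h2 | h2 : σ 2 = 0 ∨ σ 2 = 1 := by omega
    all_goals simp [util_wholeAlloc, Fin.sum_univ_three, efmCounterexample, h0, h2, hσ1]
      at henvy₀ ⊢
    all_goals linarith
  have henvy₁ := hE.util_le_of_divisible (i := 1) (g := 2) (wholeAlloc_pos_iff.mpr hσ02.2)
    (by simp [efmCounterexample])
  simp [util_wholeAlloc, Fin.sum_univ_three, efmCounterexample, hσ02, hσ1] at henvy₁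
  linarith

lemma owner_two_eq_one (hε : 0 < ε) (hE : (efmCounterexample ε hε₀ hε₁).EFM (wholeAlloc σ)) :
    σ 2 = 1 := by
  by_contra hσ2
  replace hσ2 : σ 2 = 0 := by omega
  have henvy₁ := hE.util_le_of_divisible (i := 1) (g := 2) (wholeAlloc_pos_iff.mpr hσ2)
    (by simp [efmCounterexample])
  have hσ01 : σ 0 = 1 ∧ σ 1 = 1 := by
    obtain h0 | h0 : σ 0 = 0 ∨ σ 0 = 1 := by omega
    all_goals obtain h1 | h1 : σ 1 = 0 ∨ σ 1 = 1 := by omega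
    all_goals simp [util_wholeAlloc, Fin.sum_univ_three, efmCounterexample, h0, h1, hσ2]
      at henvy₁ ⊢
    all_goals linarith
  have henvy₀ := hE.util_le_of_divisible (i := 0) (g := 1) (wholeAlloc_pos_iff.mpr hσ01.2)
    (by simp [efmCounterexample])
  simp [util_wholeAlloc, Fin.sum_univ_three, efmCounterexample, hσ01, hσ2] at henvy₀
  linarith

lemma not_efm_wholeAlloc (hε : 0 < ε) (hε' : ε < 1 / 2) :
    ¬ (efmCounterexample ε hε₀ hε₁).EFM (wholeAlloc σ) := by
  intro hE
  have hσ1 := owner_one_eq_zero hε hE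
  have hσ2 := owner_two_eq_one hε hE
  obtain hσ0 | hσ0 : σ 0 = 0 ∨ σ 0 = 1 := by omega
  · obtain ⟨g, hg, hle⟩ := hE.exists_util_sub_le_of_wholeAlloc (i := 1) (j := 0) fun g hg => by
      simp only [efmCounterexample]; grind
    obtain rfl | rfl : g = 0 ∨ g = 1 := by grind
    all_goals simp [util_wholeAlloc, Fin.sum_univ_three, efmCounterexample, hσ0, hσ1, hσ2] at hle
    all_goals linarith
  · obtain ⟨g, hg, hle⟩ := hE.exists_util_sub_le_of_wholeAlloc (i := 0) (j := 1) fun g hg => by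
      simp only [efmCounterexample]; grind
    obtain rfl | rfl : g = 0 ∨ g = 2 := by grind
    all_goals simp [util_wholeAlloc, Fin.sum_univ_three, efmCounterexample, hσ0, hσ1, hσ2] at hle
    all_goals linarith

end efmCounterexample

/-- For any `0 < ε < 1/2`, the concrete two-agent, three-good instance
(`g_0` indivisible for both with value `1 - ε/2`; `g_1` divisible for agent 1 with value `ε`
and indivisible for agent 2 with value `1 - ε`; `g_2` indivisible for agent 1 with value
`1 - ε` and divisible for agent 2 with value `ε`) admits no complete allocation that is both
EFM and non-wasteful. -/
theorem two_agent_efm_nonwasteful_incompatible (ε : ℝ) (hε0 : 0 < ε) (hε1 : ε < 1 / 2) :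
    ∃ I : FairDivision 2 3,
      (∀ i : Fin 2, I.v i 0 = 1 - ε / 2) ∧
      I.v 0 1 = ε ∧ I.v 1 1 = 1 - ε ∧
      I.v 0 2 = 1 - ε ∧ I.v 1 2 = ε ∧
      (∀ i g, I.divisible i g ↔ (i = 0 ∧ g = 1) ∨ (i = 1 ∧ g = 2)) ∧
      ¬ ∃ x, I.IsAllocation x ∧ I.EFM x ∧ I.NonWasteful x := by
  refine ⟨efmCounterexample ε hε0.le (by linarith), by simp [efmCounterexample],
    rfl, rfl, rfl, rfl, fun _ _ => Iff.rfl, ?_⟩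
  rintro ⟨x, hx, hE, hnw⟩
  obtain ⟨σ, rfl⟩ := hnw.exists_eq_wholeAlloc hx fun g =>
    ⟨if g = 1 then 1 else 0, by simp only [efmCounterexample]; split_ifs <;> omega⟩
  exact efmCounterexample.not_efm_wholeAlloc hε0 hε1 hE
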